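/- Non-identifiability of the SNSS.sd functional (Proposition 1(1), necessity). Let p ≥ 2, let A be an invertible real p×p matrix, let D₁ be a diagonal p×p matrix with strictly positive diagonal entries, and let D₂ be a diagonal p×p matrix. Assume there exist indices i ≠ j with (D₂)ᵢᵢ/(D₁)ᵢᵢ = (D₂)ⱼⱼ/(D₁)ⱼⱼ. Set M₁ = A D₁ Aᵀ and M₂ = A D₂ Aᵀ. Then there exists a real p×p matrix W satisfying W M₁ Wᵀ = I and W M₂ Wᵀ diagonal, such that W A is not a generalized permutation matrix. -/

import Mathlib

open Matrix


/-- A signed permutation matrix: exactly one nonzero entry in each row and each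
column, each such entry being `1` or `-1`. -/
def IsSignedPerm {p : ℕ} (Q : Matrix (Fin p) (Fin p) ℝ) : Prop :=
  (∀ i, ∃! j, Q i j ≠ 0) ∧ (∀ j, ∃! i, Q i j ≠ 0) ∧
  (∀ i j, Q i j ≠ 0 → Q i j = 1 ∨ Q i j = -1)

/-- A generalized permutation matrix: exactly one nonzero entry in each row and
each column. -/
def IsGenPerm {p : ℕ} (Q : Matrix (Fin p) (Fin p) ℝ) : Prop :=
  (∀ i, ∃! j, Q i j ≠ 0) ∧ (∀ j, ∃! i, Q i j ≠ 0)

open scoped Classical in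
/-- For a symmetric positive (semi)definite matrix `M`, `invSqrt M` is the inverse
of its unique positive semidefinite square root, i.e. `M^{-1/2}`. -/
noncomputable def invSqrt {p : ℕ} (M : Matrix (Fin p) (Fin p) ℝ) : Matrix (Fin p) (Fin p) ℝ :=
  if h : M.PosSemidef then
    ((h.1.eigenvectorUnitary : Matrix (Fin p) (Fin p) ℝ) *
      diagonal ((↑) ∘ (√·) ∘ h.1.eigenvalues) *
      (star h.1.eigenvectorUnitary : Matrix (Fin p) (Fin p) ℝ))⁻¹ else 0

section Aux
variable {p : ℕ} (i j : Fin p)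

/-- Rotation by 45 degrees in the (i,j) plane (entries given by `a` with `a*a = 1/2`). -/
def rotMat (a : ℝ) : Matrix (Fin p) (Fin p) ℝ :=
  Matrix.of fun k l =>
    if k = i then (if l = i then a else if l = j then a else 0)
    else if k = j then (if l = i then -a else if l = j then a else 0)
    else if l = k then 1 else 0

lemma rotMat_apply (a : ℝ) (k l : Fin p) :
    rotMat i j a k l =
    (if k = i then (if l = i then a else if l = j then a else 0)
    else if k = j then (if l = i then -a else if l = j then a else 0)
    else if l = k then 1 else 0) := rfl

lemma rotMat_mul_transpose (hij : i ≠ j) (a : ℝ) (ha : a * a = 2⁻¹) :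
    rotMat i j a * (rotMat i j a)ᵀ = 1 := by
  ext k l
  rw [Matrix.mul_apply]
  simp only [Matrix.transpose_apply]
  by_cases hk1 : k = i
  · rw [Fintype.sum_eq_add i j hij ?_]
    · by_cases hl1 : l = i
      · subst hk1 hl1
        simp [rotMat_apply, hij, ha, Matrix.one_apply]
        linarith [ha]
      · by_cases hl2 : l = j
        · subst hk1 hl2
          simp [rotMat_apply, hij, hij.symm, Matrix.one_apply]
        · subst hk1
          simp [rotMat_apply, hij, hl1, hl2, Matrix.one_apply, Ne.symm hl1, Ne.symm hl2]
    · intro m hm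
      subst hk1
      simp [rotMat_apply, hm.1, hm.2]
  · by_cases hk2 : k = j
    · rw [Fintype.sum_eq_add i j hij ?_]
      · by_cases hl1 : l = i
        · subst hk2 hl1
          simp [rotMat_apply, hij, hij.symm, Matrix.one_apply]
        · by_cases hl2 : l = j
          · subst hk2 hl2
            simp [rotMat_apply, hij, hij.symm, Matrix.one_apply]
            linarith
          · subst hk2
            simp [rotMat_apply, hij.symm, hl1, hl2, Matrix.one_apply, Ne.symm hl1, Ne.symm hl2]
      · intro m hm
        subst hk2
        simp [rotMat_apply, hk1, hm.1, hm.2]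
    · rw [Fintype.sum_eq_single k ?_]
      · by_cases hl1 : l = i
        · subst hl1
          simp [rotMat_apply, hk1, hk2, Ne.symm hk1, Matrix.one_apply]
        · by_cases hl2 : l = j
          · subst hl2
            simp [rotMat_apply, hk1, hk2, Ne.symm hk2, Matrix.one_apply]
          · simp [rotMat_apply, hk1, hk2, hl1, hl2, Matrix.one_apply, eq_comm]
      · intro m hm
        simp [rotMat_apply, hk1, hk2, hm]

lemma rotMat_comm_diagonal (a : ℝ) (f : Fin p → ℝ) (hf : f i = f j) :
    rotMat i j a * Matrix.diagonal f = Matrix.diagonal f * rotMat i j a := by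
  ext k l
  rw [Matrix.mul_diagonal, Matrix.diagonal_mul]
  rw [rotMat_apply]
  split_ifs with h1 h2 h3 h4 h5 h6 h7 <;>
    simp_all <;> ring

end Aux

/-- Non-identifiability of the SNSS.sd functional (necessity). -/
theorem snss_sd_not_identifiable {p : ℕ} (hp : 2 ≤ p)
    (A D₁ D₂ : Matrix (Fin p) (Fin p) ℝ)
    (hA : IsUnit A)
    (hD₁ : D₁.IsDiag) (hD₁pos : ∀ i, 0 < D₁ i i)
    (hD₂ : D₂.IsDiag)
    (htie : ∃ i j : Fin p, i ≠ j ∧ D₂ i i / D₁ i i = D₂ j j / D₁ j j) :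
    ∃ W : Matrix (Fin p) (Fin p) ℝ,
      W * (A * D₁ * Aᵀ) * Wᵀ = 1 ∧
      (W * (A * D₂ * Aᵀ) * Wᵀ).IsDiag ∧
      ¬ IsGenPerm (W * A) := by
  obtain ⟨i, j, hij, hratio⟩ := htie
  -- basic data
  set a : ℝ := Real.sqrt 2⁻¹ with ha_def
  have ha : a * a = 2⁻¹ := Real.mul_self_sqrt (by norm_num)
  have ha0 : a ≠ 0 := by
    intro h
    rw [h] at ha; norm_num at ha
  set R : Matrix (Fin p) (Fin p) ℝ := rotMat i j a with hR_def
  set E : Matrix (Fin p) (Fin p) ℝ :=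
    Matrix.diagonal (fun k => (Real.sqrt (D₁ k k))⁻¹) with hE_def
  -- D₁, D₂ as diagonal matrices
  have hD₁eq : D₁ = Matrix.diagonal (fun k => D₁ k k) := by
    ext k l
    by_cases h : k = l
    · subst h; simp
    · simp [Matrix.diagonal_apply_ne _ h, hD₁ h]
  have hD₂eq : D₂ = Matrix.diagonal (fun k => D₂ k k) := by
    ext k l
    by_cases h : k = l
    · subst h; simp
    · simp [Matrix.diagonal_apply_ne _ h, hD₂ h]
  have hsqrt_ne : ∀ k, Real.sqrt (D₁ k k) ≠ 0 := fun k =>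
    ne_of_gt (Real.sqrt_pos.mpr (hD₁pos k))
  have hED₁E : E * D₁ * E = 1 := by
    rw [hE_def, hD₁eq, Matrix.diagonal_mul_diagonal, Matrix.diagonal_mul_diagonal]
    rw [← Matrix.diagonal_one, Matrix.diagonal_eq_diagonal_iff]
    intro k
    have h1 := Real.mul_self_sqrt (le_of_lt (hD₁pos k))
    rw [← h1]
    field_simp
    simp only [Matrix.diagonal_apply_eq]
    exact div_self (pow_ne_zero 2 (hsqrt_ne k))
  have hED₂E : E * D₂ * E = Matrix.diagonal (fun k => D₂ k k / D₁ k k) := by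
    conv_lhs => rw [hE_def, hD₂eq]
    rw [Matrix.diagonal_mul_diagonal, Matrix.diagonal_mul_diagonal,
      Matrix.diagonal_eq_diagonal_iff]
    intro k
    have h1 := Real.mul_self_sqrt (le_of_lt (hD₁pos k))
    rw [← h1]
    field_simp
    rw [Real.sqrt_sq (Real.sqrt_nonneg _)]
  -- invertibility
  have hAdet : IsUnit A.det := (Matrix.isUnit_iff_isUnit_det A).mp hA
  have hAinv : A⁻¹ * A = 1 := Matrix.nonsing_inv_mul A hAdet
  have hATdet : IsUnit Aᵀ.det := by rwa [Matrix.det_transpose]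
  have hATinv : Aᵀ * (Aᵀ)⁻¹ = 1 := Matrix.mul_nonsing_inv Aᵀ hATdet
  refine ⟨R * E * A⁻¹, ?_, ?_, ?_⟩
  · -- W M₁ Wᵀ = 1
    have : (R * E * A⁻¹) * (A * D₁ * Aᵀ) * (R * E * A⁻¹)ᵀ
        = R * (E * D₁ * E) * Rᵀ := by
      rw [Matrix.transpose_mul, Matrix.transpose_mul, Matrix.transpose_nonsing_inv]
      rw [hE_def]
      rw [Matrix.diagonal_transpose]
      rw [← hE_def]
      calc R * E * A⁻¹ * (A * D₁ * Aᵀ) * ((Aᵀ)⁻¹ * (E * Rᵀ))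
          = R * E * ((A⁻¹ * A) * D₁ * (Aᵀ * (Aᵀ)⁻¹)) * E * Rᵀ := by
            noncomm_ring
        _ = R * (E * D₁ * E) * Rᵀ := by
            rw [hAinv, hATinv, one_mul, mul_one]; noncomm_ring
    rw [this, hED₁E, mul_one]
    exact rotMat_mul_transpose i j hij a ha
  · -- W M₂ Wᵀ diagonal
    have key : (R * E * A⁻¹) * (A * D₂ * Aᵀ) * (R * E * A⁻¹)ᵀ
        = R * (E * D₂ * E) * Rᵀ := by
      rw [Matrix.transpose_mul, Matrix.transpose_mul, Matrix.transpose_nonsing_inv]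
      rw [hE_def, Matrix.diagonal_transpose, ← hE_def]
      calc R * E * A⁻¹ * (A * D₂ * Aᵀ) * ((Aᵀ)⁻¹ * (E * Rᵀ))
          = R * E * ((A⁻¹ * A) * D₂ * (Aᵀ * (Aᵀ)⁻¹)) * E * Rᵀ := by
            noncomm_ring
        _ = R * (E * D₂ * E) * Rᵀ := by
            rw [hAinv, hATinv, one_mul, mul_one]; noncomm_ring
    rw [key, hED₂E]
    have hcomm := rotMat_comm_diagonal i j a (fun k => D₂ k k / D₁ k k) hratio
    rw [hR_def, mul_assoc, ← mul_assoc (rotMat i j a), hcomm, mul_assoc,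
      rotMat_mul_transpose i j hij a ha, mul_one]
    exact Matrix.isDiag_diagonal _
  · -- not gen perm
    have hWA : R * E * A⁻¹ * A = R * E := by
      rw [mul_assoc, hAinv, mul_one]
    rw [hWA]
    rintro ⟨h1, -⟩
    obtain ⟨l, -, huniq⟩ := h1 i
    have hii : (R * E) i i ≠ 0 := by
      rw [hE_def, Matrix.mul_diagonal, hR_def, rotMat_apply]
      simp [hij, ha0, hsqrt_ne i]
    have hijn : (R * E) i j ≠ 0 := by
      rw [hE_def, Matrix.mul_diagonal, hR_def, rotMat_apply]
      simp [hij, ha0, hsqrt_ne j]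
    have := (huniq i hii).trans (huniq j hijn).symm
    exact hij this
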